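/- Let G and H be nontrivial finite groups. Then every finite normal subgroup of the free product G ∗ H is trivial. -/

import Mathlib

/-!
A nontrivial element `x` of a free product is a reduced word `w` whose first and last letters
lie in factors `i` and `j`. If `i ≠ j`, no cancellation occurs in the powers of `w`, so `x` has
infinite order. If `i = j`, pick `m ≠ 1` in another factor: the word `w m w m⁻¹` is reduced
with different end factors, so `x * (m x m⁻¹)` has infinite order. In both cases a finite
normal subgroup containing `x` would contain an element of infinite order.
-/

open Monoid

universe u v

theorem Subgroup.eq_bot_of_forall_exists_not_isOfFinOrder_mul_conj {Γ : Type*} [Group Γ]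
    (h : ∀ x : Γ, x ≠ 1 → ∃ c, ¬IsOfFinOrder (x * (c * x * c⁻¹)))
    (N : Subgroup Γ) [N.Normal] [Finite N] : N = ⊥ := by
  refine (eq_bot_iff_forall N).2 fun x hxN => by_contra fun hx => ?_
  obtain ⟨c, hc⟩ := h x hx
  have hmem : x * (c * x * c⁻¹) ∈ N := N.mul_mem hxN (‹N.Normal›.conj_mem x hxN c)
  exact hc (N.subtype.isOfFinOrder (isOfFinOrder_of_finite ⟨_, hmem⟩))

namespace Monoid.CoprodI

variable {ι : Type*} {M : ι → Type*} [∀ i, Group (M i)] {i j : ι}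

theorem NeWord.prod_ne_one (w : NeWord M i j) : w.prod ≠ 1 := by
  classical
  intro h
  have : w.toWord = Word.empty := Word.equiv.symm.injective (h.trans Word.prod_empty.symm)
  exact w.toList_ne_nil (congrArg Word.toList this)

theorem NeWord.exists_prod_eq_pow_succ (hji : j ≠ i) (w : NeWord M i j) (n : ℕ) :
    ∃ w' : NeWord M i j, w'.prod = w.prod ^ (n + 1) := by
  induction n with
  | zero => exact ⟨w, (pow_one _).symm⟩
  | succ n ih =>
    obtain ⟨w', hw'⟩ := ih
    exact ⟨w.append hji w', by rw [append_prod, hw', ← pow_succ']⟩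

theorem NeWord.not_isOfFinOrder_prod (hij : i ≠ j) (w : NeWord M i j) :
    ¬IsOfFinOrder w.prod := by
  rw [isOfFinOrder_iff_pow_eq_one]
  rintro ⟨n, hn, hw⟩
  obtain ⟨w', hw'⟩ := w.exists_prod_eq_pow_succ hij.symm (n - 1)
  rw [Nat.sub_add_cancel hn, hw] at hw'
  exact w'.prod_ne_one hw'

theorem exists_neWord_prod_eq {x : CoprodI M} (hx : x ≠ 1) :
    ∃ (i j : ι) (w : NeWord M i j), w.prod = x := by
  classical
  have hword : Word.equiv x ≠ Word.empty := fun h =>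
    hx (by rw [← Word.equiv.symm_apply_apply x, h]; exact Word.prod_empty)
  obtain ⟨i, j, w, hw⟩ := NeWord.of_word _ hword
  exact ⟨i, j, w, by rw [NeWord.prod, hw]; exact Word.equiv.symm_apply_apply x⟩

theorem exists_not_isOfFinOrder_mul_conj (hM : ∀ i, ∃ k ≠ i, Nontrivial (M k))
    {x : CoprodI M} (hx : x ≠ 1) : ∃ c, ¬IsOfFinOrder (x * (c * x * c⁻¹)) := by
  obtain ⟨i, j, w, rfl⟩ := exists_neWord_prod_eq hx
  by_cases hij : i = j
  · subst hij
    obtain ⟨k, hki, _⟩ := hM i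
    obtain ⟨m, hm⟩ := exists_ne (1 : M k)
    let w' := ((w.append hki.symm (.singleton m hm)).append hki w).append hki.symm
      (.singleton m⁻¹ (inv_ne_one.2 hm))
    refine ⟨of m, ?_⟩
    convert w'.not_isOfFinOrder_prod hki.symm using 1
    simp [w', mul_assoc]
  · refine ⟨1, ?_⟩
    convert (w.append (Ne.symm hij) w).not_isOfFinOrder_prod hij using 1
    simp

end Monoid.CoprodI

namespace Monoid.Coprod

abbrev boolFamily (G : Type u) (H : Type v) : Bool → Type (max u v) :=
  fun b => cond b (ULift.{v} G) (ULift.{u} H)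

theorem exists_ne_nontrivial_boolFamily {G H : Type*} [Nontrivial G] [Nontrivial H] :
    ∀ b, ∃ k ≠ b, Nontrivial (boolFamily G H k)
  | true => ⟨false, by decide, inferInstanceAs (Nontrivial (ULift H))⟩
  | false => ⟨true, by decide, inferInstanceAs (Nontrivial (ULift G))⟩

variable (G : Type u) (H : Type v) [Group G] [Group H]

instance : ∀ b, Group (boolFamily G H b)
  | true => inferInstanceAs (Group (ULift G))
  | false => inferInstanceAs (Group (ULift H))

def toCoprodI : Coprod G H →* CoprodI (boolFamily G H) :=
  lift ((CoprodI.of (i := true)).comp MulEquiv.ulift.symm.toMonoidHom)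
    ((CoprodI.of (i := false)).comp MulEquiv.ulift.symm.toMonoidHom)

def ofCoprodI : CoprodI (boolFamily G H) →* Coprod G H :=
  CoprodI.lift fun
    | true => inl.comp MulEquiv.ulift.toMonoidHom
    | false => inr.comp MulEquiv.ulift.toMonoidHom

def equivCoprodI : Coprod G H ≃* CoprodI (boolFamily G H) :=
  (toCoprodI G H).toMulEquiv (ofCoprodI G H)
    (by ext <;> simp [toCoprodI, ofCoprodI])
    (CoprodI.ext_hom _ _ fun
      | true => by ext; simp [toCoprodI, ofCoprodI]
      | false => by ext; simp [toCoprodI, ofCoprodI])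

variable {G H}

theorem exists_not_isOfFinOrder_mul_conj [Nontrivial G] [Nontrivial H] {x : Coprod G H}
    (hx : x ≠ 1) : ∃ c, ¬IsOfFinOrder (x * (c * x * c⁻¹)) := by
  let e := equivCoprodI G H
  obtain ⟨c, hc⟩ := CoprodI.exists_not_isOfFinOrder_mul_conj exists_ne_nontrivial_boolFamily
    (e.map_ne_one_iff.2 hx)
  refine ⟨e.symm c, fun h => hc ?_⟩
  simpa using e.toMonoidHom.isOfFinOrder h

end Monoid.Coprod

theorem finite_normal_subgroup_of_free_product_is_trivial_general
    (G H : Type*) [Group G] [Group H]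
    [Nontrivial G] [Nontrivial H]
    (N : Subgroup (Monoid.Coprod G H)) (hN : N.Normal) (hfin : Finite N) :
    N = ⊥ :=
  N.eq_bot_of_forall_exists_not_isOfFinOrder_mul_conj fun _ =>
    Coprod.exists_not_isOfFinOrder_mul_conj

theorem finite_normal_subgroup_of_free_product_is_trivial
    (G H : Type*) [Group G] [Group H] [Finite G] [Finite H]
    [Nontrivial G] [Nontrivial H]
    (N : Subgroup (Monoid.Coprod G H)) (hN : N.Normal) (hfin : Finite N) :
    N = ⊥ :=
  finite_normal_subgroup_of_free_product_is_trivial_general G H N hN hfin
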